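/- arXiv:2007.00956 — 2 statements merged into one kernel-verified Lean document; each statement's English description precedes it below -/
import Mathlib

section
/- Let L/ℚ be a Galois extension with [L : ℚ] = 4 and let v ∈ L be irrational (v ∉ ℚ). Then there exists a primitive element α of L and a polynomial f ∈ ℚ[x] with deg f = [L : ℚ(v)] such that v = f(α); in particular min deg_L(v) = [L : ℚ(v)]. -/
/-!
A primitive element `α` of `L` has degree `[L : ℚ(v)]` over `ℚ(v)`, and if `v = f(α)` it is a root
of `f - v ∈ ℚ(v)[X]`; this gives `deg f ≥ [L : ℚ(v)]`.

For the converse, if `ℚ(v) = L` take `α = v`. Otherwise `ℚ(v)` and `L / ℚ(v)` are both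
quadratic. Completing the square gives `β ∉ ℚ(v)` with `β² ∈ ℚ(v)`, and multiplying `β` by `v`
or by `1 + v` if necessary makes `β²` irrational. As `ℚ(v) = ℚ + ℚ v`, then `v = a β² + b`
with `a ≠ 0`, and `ℚ(β) = L` because `ℚ(β)` contains `ℚ(v)` but not `β`.
-/

/-- The minimal degree of an algebraic number `v ∈ L`: the minimum, over all primitive
elements `α` of `L` (i.e. `ℚ(α) = L`), of the degree of a polynomial `f ∈ ℚ[x]`
with `f(α) = v`. -/
noncomputable def minDegree (L : Type*) [Field L] [Algebra ℚ L] (v : L) : ℕ :=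
  sInf {d : ℕ | ∃ α : L, IntermediateField.adjoin ℚ {α} = ⊤ ∧
    ∃ f : Polynomial ℚ, f.natDegree = d ∧ Polynomial.aeval α f = v}

open IntermediateField Polynomial Module

section

variable {F L : Type*} [Field F] [Field L] [Algebra F L]

theorem IntermediateField.range_algebraMap (K : IntermediateField F L) :
    Set.range (algebraMap K L) = K :=
  Subtype.range_coe

theorem natDegree_ne_zero_of_aeval_notMem_range {α : L} {f : F[X]}
    (hf : aeval α f ∉ Set.range (algebraMap F L)) : f.natDegree ≠ 0 := by
  intro h
  rw [eq_C_of_natDegree_eq_zero h, aeval_C] at hf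
  exact hf ⟨_, rfl⟩

theorem finrank_adjoin_simple_le_natDegree {α v : L} (hα : F⟮α⟯ = ⊤) {f : F[X]}
    (hf : aeval α f = v) (hv : v ∉ Set.range (algebraMap F L)) :
    finrank F⟮v⟯ L ≤ f.natDegree := by
  set p : F⟮v⟯[X] := f.map (algebraMap F F⟮v⟯) - C (AdjoinSimple.gen F v)
  have hp : p.natDegree = f.natDegree := by
    rw [natDegree_sub_C, natDegree_map]
  have hp0 : p ≠ 0 := by
    intro h
    exact natDegree_ne_zero_of_aeval_notMem_range (hf ▸ hv) (by rw [← hp, h, natDegree_zero])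
  have hpα : aeval α p = 0 := by
    simp [p, aeval_map_algebraMap, hf]
  have hint : IsIntegral F⟮v⟯ α := IsAlgebraic.isIntegral ⟨p, hp0, hpα⟩
  calc finrank F⟮v⟯ L = finrank F⟮v⟯ F⟮v⟯⟮α⟯ := by
        rw [adjoin_eq_top_of_adjoin_eq_top F hα, finrank_top']
    _ = (minpoly F⟮v⟯ α).natDegree := adjoin.finrank hint
    _ ≤ p.natDegree := natDegree_le_of_dvd (minpoly.dvd _ _ hpα) hp0
    _ = f.natDegree := hp

theorem exists_notMem_range_sq_mem_range {K : Type*} [Field K] [Algebra K L] [NeZero (2 : L)]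
    (h : finrank K L = 2) :
    ∃ β : L, β ∉ Set.range (algebraMap K L) ∧ β ^ 2 ∈ Set.range (algebraMap K L) := by
  have : Module.Finite K L := Module.finite_of_finrank_pos (by omega)
  have hbot : (⊥ : IntermediateField K L) ≠ ⊤ := fun h' ↦ by
    rw [bot_eq_top_iff_finrank_eq_one.mp h'] at h
    exact absurd h (by norm_num)
  obtain ⟨γ, -, hγ⟩ := SetLike.exists_of_lt hbot.lt_top
  rw [mem_bot] at hγ
  have hγint : IsIntegral K γ := .of_finite K γ
  set a := (minpoly K γ).coeff 1
  set b := (minpoly K γ).coeff 0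
  have hdeg : (minpoly K γ).natDegree = 2 := by
    have := minpoly.natDegree_le (A := K) γ
    have := minpoly.natDegree_pos hγint
    have : (minpoly K γ).natDegree ≠ 1 := fun h1 ↦ hγ (minpoly.natDegree_eq_one_iff.mp h1)
    omega
  have hquad : γ ^ 2 + algebraMap K L a * γ + algebraMap K L b = 0 := by
    have h0 := minpoly.aeval K γ
    rw [(minpoly.monic hγint).as_sum, hdeg] at h0
    simp only [Finset.sum_range_succ, Finset.sum_range_zero, map_add, map_mul, map_pow, aeval_X,
      aeval_C, pow_zero, pow_one, mul_one, zero_add] at h0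
    linear_combination h0
  have h2 : (2 : L) ≠ 0 := two_ne_zero
  refine ⟨γ + algebraMap K L a / 2, fun ⟨c, hc⟩ ↦ hγ ⟨c - a / 2, ?_⟩, ⟨(a / 2) ^ 2 - b, ?_⟩⟩
  · simp only [map_sub, map_div₀, map_ofNat, hc]
    field_simp
    ring
  · simp only [map_sub, map_div₀, map_ofNat, map_pow]
    field_simp
    linear_combination (-4 : L) * hquad

theorem exists_add_sq_notMem_range [NeZero (2 : L)] {v : L}
    (hv : v ∉ Set.range (algebraMap F L)) :
    ∃ a : F, (v + algebraMap F L a) ^ 2 ∉ Set.range (algebraMap F L) := by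
  by_contra! h
  obtain ⟨s, hs⟩ := h 0
  obtain ⟨t, ht⟩ := h 1
  refine hv ⟨(t - s - 1) / 2, ?_⟩
  have h2 : (2 : L) ≠ 0 := two_ne_zero
  simp only [map_zero, add_zero, map_one] at hs ht
  simp only [map_div₀, map_sub, map_one, map_ofNat, hs, ht]
  field_simp
  ring

theorem exists_notMem_sq_mem_notMem_range [NeZero (2 : L)] {K : IntermediateField F L}
    (hK : finrank K L = 2) {v : L} (hvK : v ∈ K) (hv : v ∉ Set.range (algebraMap F L)) :
    ∃ α ∉ K, α ^ 2 ∈ K ∧ α ^ 2 ∉ Set.range (algebraMap F L) := by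
  obtain ⟨β, hβK, hβ2K⟩ := exists_notMem_range_sq_mem_range hK
  rw [range_algebraMap] at hβK hβ2K
  by_cases hβ2F : β ^ 2 ∈ Set.range (algebraMap F L)
  swap
  · exact ⟨β, hβK, hβ2K, hβ2F⟩
  obtain ⟨q, hq⟩ := hβ2F
  obtain ⟨a, ha⟩ := exists_add_sq_notMem_range hv
  set k := v + algebraMap F L a
  have hkK : k ∈ K := K.add_mem hvK (K.algebraMap_mem a)
  have hk0 : k ≠ 0 := fun h ↦ ha ⟨0, by simp [h]⟩
  have hq0 : algebraMap F L q ≠ 0 := by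
    rw [hq]
    exact pow_ne_zero 2 fun h ↦ hβK (h ▸ K.zero_mem)
  refine ⟨β * k, fun h ↦ hβK ?_, ?_, fun ⟨t, ht⟩ ↦ ha ⟨t / q, ?_⟩⟩
  · simpa [hk0] using K.div_mem h hkK
  · rw [mul_pow]
    exact K.mul_mem hβ2K (pow_mem hkK 2)
  · rw [map_div₀, ht, mul_pow, ← hq]
    field_simp

theorem exists_natDegree_eq_one_aeval_eq {v x : L} (hv : finrank F F⟮v⟯ = 2) (hx : x ∈ F⟮v⟯)
    (hxF : x ∉ Set.range (algebraMap F L)) : ∃ g : F[X], g.natDegree = 1 ∧ aeval x g = v := by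
  have : FiniteDimensional F F⟮v⟯ := Module.finite_of_finrank_pos (by omega)
  have hint : IsIntegral F v := isIntegral_iff.mp (IsIntegral.of_finite F (AdjoinSimple.gen F v))
  obtain ⟨h, hdeg, hxh⟩ := (adjoin.powerBasis hint).exists_eq_aeval ⟨x, hx⟩
  rw [adjoin.powerBasis_dim, ← adjoin.finrank hint, hv] at hdeg
  replace hxh : x = aeval v h := by
    simpa [aeval_algebraMap_apply] using congrArg (algebraMap F⟮v⟯ L) hxh
  rw [eq_X_add_C_of_natDegree_le_one (by omega : h.natDegree ≤ 1)] at hxh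
  set c := h.coeff 1
  have hc : c ≠ 0 := fun hc ↦ hxF ⟨h.coeff 0, by simp [hxh, hc]⟩
  refine ⟨C c⁻¹ * (X - C (h.coeff 0)), ?_, ?_⟩
  · rw [natDegree_C_mul (inv_ne_zero hc), natDegree_X_sub_C]
  · simp only [hxh, map_mul, map_add, map_sub, aeval_C, aeval_X]
    rw [add_sub_cancel_right, ← mul_assoc, ← map_mul, inv_mul_cancel₀ hc, map_one, one_mul]

theorem adjoin_simple_eq_top_of_notMem_of_le {K : IntermediateField F L}
    (hK : (finrank K L).Prime) {α : L} (hα : α ∉ K) (hKα : K ≤ F⟮α⟯) : F⟮α⟯ = ⊤ := by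
  have := isSimpleOrder_of_finrank_prime K L hK
  have hKα' : K⟮α⟯ = ⊤ := (eq_bot_or_eq_top K⟮α⟯).resolve_left fun h ↦ hα <| by
    rwa [adjoin_simple_eq_bot_iff, mem_bot, range_algebraMap] at h
  simpa [restrictScalars_adjoin_eq_sup, sup_eq_right.mpr hKα] using
    congrArg (restrictScalars F) hKα'

theorem exists_adjoin_eq_top_aeval_eq_of_finrank_eq_two [NeZero (2 : L)] {v : L}
    (hv₁ : finrank F F⟮v⟯ = 2) (hv₂ : finrank F⟮v⟯ L = 2) :
    ∃ α : L, F⟮α⟯ = ⊤ ∧ ∃ f : F[X], f.natDegree = 2 ∧ aeval α f = v := by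
  have hv : v ∉ Set.range (algebraMap F L) := by
    rw [← mem_bot, ← finrank_adjoin_simple_eq_one_iff, hv₁]
    norm_num
  obtain ⟨α, hαK, hα2K, hα2F⟩ :=
    exists_notMem_sq_mem_notMem_range hv₂ (mem_adjoin_simple_self F v) hv
  obtain ⟨g, hg, hgv⟩ := exists_natDegree_eq_one_aeval_eq hv₁ hα2K hα2F
  have hf : aeval α (g.comp (X ^ 2)) = v := by rw [aeval_comp, map_pow, aeval_X, hgv]
  have hvα : v ∈ F⟮α⟯ := hf ▸ algebra_adjoin_le_adjoin F {α} (aeval_mem_adjoin_singleton F α)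
  refine ⟨α, adjoin_simple_eq_top_of_notMem_of_le (hv₂ ▸ Nat.prime_two) hαK
    (adjoin_simple_le_iff.mpr hvα), g.comp (X ^ 2), ?_, hf⟩
  rw [natDegree_comp, hg, natDegree_X_pow]

theorem exists_adjoin_eq_top_aeval_eq_of_finrank_eq_four [NeZero (2 : L)]
    (hL : finrank F L = 4) {v : L} (hv : v ∉ Set.range (algebraMap F L)) :
    ∃ α : L, F⟮α⟯ = ⊤ ∧ ∃ f : F[X], f.natDegree = finrank F⟮v⟯ L ∧ aeval α f = v := by
  have htower : finrank F F⟮v⟯ * finrank F⟮v⟯ L = 4 := hL ▸ finrank_mul_finrank F F⟮v⟯ L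
  have hv₁ : finrank F F⟮v⟯ ≠ 1 := by rwa [Ne, finrank_adjoin_simple_eq_one_iff, mem_bot]
  have hdvd : finrank F⟮v⟯ L ∣ 4 := Dvd.intro_left _ htower
  have hle : finrank F⟮v⟯ L ≤ 4 := Nat.le_of_dvd (by norm_num) hdvd
  obtain h | h : finrank F⟮v⟯ L = 1 ∨ finrank F⟮v⟯ L = 2 := by
    interval_cases finrank F⟮v⟯ L <;> omega
  · exact ⟨v, finrank_eq_one_iff_eq_top.mp h, X, h ▸ natDegree_X, aeval_X v⟩
  · rw [h]
    exact exists_adjoin_eq_top_aeval_eq_of_finrank_eq_two (by rw [h] at htower; omega) h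

end

theorem stmt_1_general (L : Type*) [Field L] [NumberField L]
    (hdeg : Module.finrank ℚ L = 4) (v : L)
    (hv : v ∉ Set.range (algebraMap ℚ L)) :
    (∃ α : L, IntermediateField.adjoin ℚ {α} = ⊤ ∧
      ∃ f : Polynomial ℚ,
        f.natDegree = Module.finrank (IntermediateField.adjoin ℚ {v}) L ∧
        Polynomial.aeval α f = v) ∧
    minDegree L v = Module.finrank (IntermediateField.adjoin ℚ {v}) L := by
  have hex := exists_adjoin_eq_top_aeval_eq_of_finrank_eq_four hdeg hv
  refine ⟨hex, IsLeast.csInf_eq ⟨hex, ?_⟩⟩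
  rintro _ ⟨α, hα, f, rfl, hf⟩
  exact finrank_adjoin_simple_le_natDegree hα hf hv

/-- If `L/ℚ` is Galois of degree `4` and `v ∈ L` is irrational, then there is a primitive
element `α` of `L` and a polynomial `f ∈ ℚ[x]` of degree `[L : ℚ(v)]` with `v = f(α)`;
in particular `min deg_L(v) = [L : ℚ(v)]`. -/
theorem stmt_1 (L : Type*) [Field L] [NumberField L] [IsGalois ℚ L]
    (hdeg : Module.finrank ℚ L = 4) (v : L)
    (hv : v ∉ Set.range (algebraMap ℚ L)) :
    (∃ α : L, IntermediateField.adjoin ℚ {α} = ⊤ ∧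
      ∃ f : Polynomial ℚ,
        f.natDegree = Module.finrank (IntermediateField.adjoin ℚ {v}) L ∧
        Polynomial.aeval α f = v) ∧
    minDegree L v = Module.finrank (IntermediateField.adjoin ℚ {v}) L :=
  stmt_1_general L hdeg v hv
end

section
/- Let L = ℚ(√A, √B, √C) be a triquadratic number field such that B − A = c² for some nonzero integer c. Then the set of rational numbers a for which min deg_L(√A + a√B) = 2 is infinite. (For any integers m > n > 0, the pair a = (m² + n²)/(m² − n²), b = 2mn/(c(m² − n²)) satisfies a² − 1 = (B − A)b², and each such a works.) -/
/-!
Since `ℚ(√A + a√B) = ℚ(√A, √B)` has degree at most 4, the element `x = √A + a√B` is neither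
rational nor primitive, so it is not a polynomial of degree at most 1 in a primitive element.
For degree 2 it suffices to write `x = t + k γ²` with `t, k ∈ ℚ` and `γ ∈ ℚ(√A, √B)`:
then `β = γ√C` is primitive and `x = t + (k / C) β²`. Such a representation comes from the
identity `2 (α + δ) (α + a√B) = (α + δ + a√B)²`, valid whenever `α² - a²B = δ²`, used once over
`ℚ(√A)` and once over `ℚ`. The two norm equations this requires, `a₀² - A = e²` and
`g² - a²B = e²`, have a common rational solution because `a² - 1 = (B - A) b²`.
-/

/-- `L = ℚ(√A, √B, √C)` is a triquadratic number field: `A, B, C, ABC` are distinct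
square-free integers, none equal to `0` or `1`, `u, v, w ∈ L` are square roots of
`A, B, C` generating `L` over `ℚ`, and `[L : ℚ] = 8`. -/
structure IsTriquadratic (A B C : ℤ) (L : Type*) [Field L] [Algebra ℚ L]
    (u v w : L) : Prop where
  sqfA : Squarefree A
  sqfB : Squarefree B
  sqfC : Squarefree C
  sqfABC : Squarefree (A * B * C)
  A_ne_B : A ≠ B
  A_ne_C : A ≠ C
  B_ne_C : B ≠ C
  ABC_ne_A : A * B * C ≠ A
  ABC_ne_B : A * B * C ≠ B
  ABC_ne_C : A * B * C ≠ C
  A_ne_zero : A ≠ 0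
  B_ne_zero : B ≠ 0
  C_ne_zero : C ≠ 0
  A_ne_one : A ≠ 1
  B_ne_one : B ≠ 1
  C_ne_one : C ≠ 1
  ABC_ne_one : A * B * C ≠ 1
  hu : u ^ 2 = algebraMap ℚ L (A : ℚ)
  hv : v ^ 2 = algebraMap ℚ L (B : ℚ)
  hw : w ^ 2 = algebraMap ℚ L (C : ℚ)
  gen : IntermediateField.adjoin ℚ {u, v, w} = ⊤
  deg : Module.finrank ℚ L = 8

open Polynomial IntermediateField

theorem not_isSquare_intCast_of_squarefree {D : ℤ} (hD : Squarefree D) (hD1 : D ≠ 1) :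
    ¬IsSquare (D : ℚ) := by
  rw [Rat.isSquare_intCast_iff]
  rintro ⟨r, rfl⟩
  rcases Int.isUnit_iff.mp (hD r dvd_rfl) with rfl | rfl <;> simp at hD1

theorem two_mul_add_mul_add_mul_eq_sq {R : Type*} [CommRing R] {v B α δ a : R}
    (hv : v ^ 2 = B) (h : α ^ 2 - a ^ 2 * B = δ ^ 2) :
    2 * (α + δ) * (α + a * v) = (α + δ + a * v) ^ 2 := by
  linear_combination h - a ^ 2 * hv

theorem mul_sq_mul_add_mul_eq_mul_sq {R : Type*} [CommRing R] {u v A B a a₀ e g : R}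
    (hu : u ^ 2 = A) (hv : v ^ 2 = B) (h₀ : a₀ ^ 2 - A = e ^ 2)
    (hg : g ^ 2 - a ^ 2 * B = e ^ 2) :
    (e + g) * (a₀ + e + u) ^ 2 * (e * (u + a * v) + a₀ * g) =
      (a₀ + e) * ((e + g) * (u + a₀) + e * a * v) ^ 2 := by
  have hz := two_mul_add_mul_add_mul_eq_sq (α := e * u + a₀ * g) (δ := e * a₀ + g * u)
    (a := e * a) hv
    (by linear_combination (e ^ 2 - g ^ 2) * hu + (g ^ 2 - e ^ 2) * h₀ + e ^ 2 * hg)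
  have hy := two_mul_add_mul_add_mul_eq_sq (α := a₀) (δ := e) (a := 1) hu
    (by linear_combination h₀)
  linear_combination (-(e + g) * (e * u + a₀ * g + e * a * v)) * hy + (a₀ + e) * hz

-- `a₀² - e² = b⁻¹ · A b` and `g² - e² = (a² / b) · b B`.
theorem exists_sq_sub_eq_sq_of_sq_sub_one {K : Type*} [Field K] (h2 : (2 : K) ≠ 0)
    {A B a b : K} (hb : b ≠ 0) (hab : a ^ 2 - 1 = (B - A) * b ^ 2) :
    ∃ a₀ e g : K, a₀ ^ 2 - A = e ^ 2 ∧ g ^ 2 - a ^ 2 * B = e ^ 2 ∧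
      a₀ + e = A * b ∧ e + g = b * B ∧ 2 * b * e = A * b ^ 2 - 1 :=
  ⟨(A * b ^ 2 + 1) / (2 * b), (A * b ^ 2 - 1) / (2 * b), ((2 * B - A) * b ^ 2 + 1) / (2 * b),
    by field_simp; ring, by field_simp; linear_combination (-4 * B * b ^ 2) * hab,
    by field_simp; ring, by field_simp; ring, by field_simp⟩

section Extension

variable {K L : Type*} [Field K] [Field L] [Algebra K L]

theorem notMem_bot_of_sq_eq_algebraMap {v : L} {B : K} (hv : v ^ 2 = algebraMap K L B)
    (hB : ¬IsSquare B) : v ∉ (⊥ : IntermediateField K L) := by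
  intro h
  obtain ⟨s, rfl⟩ := mem_bot.mp h
  exact hB ⟨s, (algebraMap K L).injective (by rw [map_mul, ← sq, hv])⟩

theorem finrank_adjoin_simple_le_two {u : L} {A : K} (hu : u ^ 2 = algebraMap K L A) :
    Module.finrank K K⟮u⟯ ≤ 2 := by
  have hroot : aeval u (X ^ 2 - Polynomial.C A) = 0 := by simp [hu]
  have hmonic : (X ^ 2 - Polynomial.C A).Monic := monic_X_pow_sub_C A two_ne_zero
  rw [adjoin.finrank ⟨_, hmonic, hroot⟩, ← natDegree_X_pow_sub_C (n := 2) (r := A)]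
  exact natDegree_le_of_dvd (minpoly.dvd K u hroot) hmonic.ne_zero

theorem finrank_adjoin_pair_le_four {u v : L} {A B : K} (hu : u ^ 2 = algebraMap K L A)
    (hv : v ^ 2 = algebraMap K L B) : Module.finrank K (adjoin K {u, v}) ≤ 4 := by
  rw [Set.insert_eq, adjoin_union]
  calc Module.finrank K ↥(K⟮u⟯ ⊔ K⟮v⟯) ≤ Module.finrank K K⟮u⟯ * Module.finrank K K⟮v⟯ :=
        finrank_sup_le _ _
    _ ≤ 2 * 2 :=
        Nat.mul_le_mul (finrank_adjoin_simple_le_two hu) (finrank_adjoin_simple_le_two hv)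

-- `u v = (x² - A - a²B) / 2a` and `a B u + A v = x · u v`, a linear system in `u, v` with
-- determinant `a²B - A`.
theorem adjoin_simple_add_mul_eq_adjoin_pair (h2 : (2 : K) ≠ 0) {u v : L} {A B a : K}
    (hu : u ^ 2 = algebraMap K L A) (hv : v ^ 2 = algebraMap K L B) (ha : a ≠ 0)
    (haB : a ^ 2 * B ≠ A) : K⟮u + algebraMap K L a * v⟯ = adjoin K {u, v} := by
  set x := u + algebraMap K L a * v
  set F := K⟮x⟯
  have hx : x ∈ F := mem_adjoin_simple_self K x
  have hvx : v = (algebraMap K L (2 * a * (a ^ 2 * B - A)))⁻¹ *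
      (algebraMap K L (2 * a ^ 2 * B) * x - x * (x ^ 2 - algebraMap K L (A + a ^ 2 * B))) := by
    have hc : algebraMap K L (2 * a * (a ^ 2 * B - A)) ≠ 0 :=
      (_root_.map_ne_zero _).mpr (mul_ne_zero (mul_ne_zero h2 ha) (sub_ne_zero.mpr haB))
    rw [eq_inv_mul_iff_mul_eq₀ hc]
    simp only [x, map_mul, map_sub, map_add, map_pow, map_ofNat]
    linear_combination (u + 3 * algebraMap K L a * v) * hu
      + (3 * algebraMap K L a ^ 2 * u + algebraMap K L a ^ 3 * v) * hv
  have hvmem : v ∈ F := by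
    rw [hvx]
    exact mul_mem (inv_mem (F.algebraMap_mem _)) (sub_mem (mul_mem (F.algebraMap_mem _) hx)
      (mul_mem hx (sub_mem (pow_mem hx 2) (F.algebraMap_mem _))))
  have humem : u ∈ F := by
    rw [show u = x - algebraMap K L a * v by ring]
    exact sub_mem hx (mul_mem (F.algebraMap_mem a) hvmem)
  refine le_antisymm (adjoin_simple_le_iff.mpr ?_) (adjoin_le_iff.mpr ?_)
  · exact add_mem (subset_adjoin K _ (by simp)) (mul_mem ((adjoin K {u, v}).algebraMap_mem a)
      (subset_adjoin K _ (by simp)))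
  · rintro _ (rfl | rfl)
    · exact humem
    · exact hvmem

theorem exists_add_mul_sub_eq_mul_sq (h2 : (2 : K) ≠ 0) {u v : L} {A B a b : K}
    (hu : u ^ 2 = algebraMap K L A) (hv : v ^ 2 = algebraMap K L B) (hA : A ≠ 0) (hB : B ≠ 0)
    (hb : b ≠ 0) (hAb : A * b ^ 2 ≠ 1) (hab : a ^ 2 - 1 = (B - A) * b ^ 2) :
    ∃ t k : K, k ≠ 0 ∧ ∃ γ ∈ adjoin K {u, v},
      u + algebraMap K L a * v - algebraMap K L t = algebraMap K L k * γ ^ 2 := by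
  obtain ⟨a₀, e, g, h₀, hg, hae, heg, he⟩ := exists_sq_sub_eq_sq_of_sq_sub_one h2 hb hab
  have he₀ : e ≠ 0 := by
    rintro rfl
    exact hAb (by linear_combination -he)
  have hD : algebraMap K L (a₀ + e) + u ≠ 0 := by
    intro h
    have hsq : algebraMap K L A = algebraMap K L ((a₀ + e) ^ 2) := by
      rw [← hu, eq_neg_of_add_eq_zero_right h, neg_sq, map_pow]
    have hA' := (algebraMap K L).injective hsq
    rw [hae] at hA'
    exact hAb (mul_left_cancel₀ hA (by linear_combination -hA'))
  have key := mul_sq_mul_add_mul_eq_mul_sq hu hv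
    (by simpa using congrArg (algebraMap K L) h₀) (by simpa using congrArg (algebraMap K L) hg)
  refine ⟨-(a₀ * g / e), (a₀ + e) / (e * (e + g)), div_ne_zero (hae ▸ mul_ne_zero hA hb)
    (mul_ne_zero he₀ (heg ▸ mul_ne_zero hb hB)),
    (algebraMap K L (e + g) * (u + algebraMap K L a₀) + algebraMap K L (e * a) * v) /
      (algebraMap K L (a₀ + e) + u), ?_, ?_⟩
  · set S := adjoin K {u, v}
    have hu' : u ∈ S := subset_adjoin K _ (by simp)
    have hv' : v ∈ S := subset_adjoin K _ (by simp)
    exact div_mem (add_mem (mul_mem (S.algebraMap_mem _) (add_mem hu' (S.algebraMap_mem _)))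
      (mul_mem (S.algebraMap_mem _) hv')) (add_mem (S.algebraMap_mem _) hu')
  · have hE : algebraMap K L e ≠ 0 := (_root_.map_ne_zero _).mpr he₀
    have hEG : algebraMap K L (e + g) ≠ 0 :=
      (_root_.map_ne_zero _).mpr (heg ▸ mul_ne_zero hb hB)
    simp only [map_neg, map_div₀, map_mul, map_add] at key hD hEG ⊢
    field_simp
    linear_combination key

theorem eq_add_mul_sq_mul {x γ w : L} {t k d : K}
    (hx : x - algebraMap K L t = algebraMap K L k * γ ^ 2)
    (hw : w ^ 2 = algebraMap K L d) (hd : d ≠ 0) :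
    x = algebraMap K L t + algebraMap K L (k / d) * (γ * w) ^ 2 := by
  have hd' : algebraMap K L d ≠ 0 := (_root_.map_ne_zero _).mpr hd
  rw [mul_pow, hw, map_div₀]
  field_simp
  linear_combination hx

theorem adjoin_simple_mul_eq_top {x γ w : L} {t k d : K} (hγ : γ ∈ K⟮x⟯) (hγ₀ : γ ≠ 0)
    (hx : x - algebraMap K L t = algebraMap K L k * γ ^ 2) (hw : w ^ 2 = algebraMap K L d)
    (hd : d ≠ 0) (htop : K⟮x⟯ ⊔ K⟮w⟯ = ⊤) : K⟮γ * w⟯ = ⊤ := by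
  set F := K⟮γ * w⟯
  have hβ : γ * w ∈ F := mem_adjoin_simple_self K _
  have hxF : K⟮x⟯ ≤ F := by
    rw [adjoin_simple_le_iff, eq_add_mul_sq_mul hx hw hd]
    exact add_mem (F.algebraMap_mem t) (mul_mem (F.algebraMap_mem _) (pow_mem hβ 2))
  have hwF : w ∈ F := by
    rw [show w = γ⁻¹ * (γ * w) by field_simp]
    exact mul_mem (inv_mem (hxF hγ)) hβ
  rw [eq_top_iff, ← htop]
  exact sup_le hxF (adjoin_simple_le_iff.mpr hwF)

theorem mem_adjoin_simple_aeval_of_natDegree_eq_one (β : L) {f : K[X]} (hf : f.natDegree = 1) :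
    β ∈ K⟮aeval β f⟯ := by
  set F := K⟮aeval β f⟯
  have hf₁ : f.coeff 1 ≠ 0 := by
    rw [← hf]
    exact leadingCoeff_ne_zero.mpr (ne_zero_of_natDegree_gt (n := 0) (by omega))
  have hfβ : aeval β f = algebraMap K L (f.coeff 1) * β + algebraMap K L (f.coeff 0) := by
    conv_lhs => rw [eq_X_add_C_of_natDegree_le_one hf.le]
    simp
  have hβ : β = (algebraMap K L (f.coeff 1))⁻¹ * (aeval β f - algebraMap K L (f.coeff 0)) := by
    rw [hfβ, add_sub_cancel_right, ← mul_assoc, inv_mul_cancel₀ ((_root_.map_ne_zero _).mpr hf₁),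
      one_mul]
  rw [hβ]
  exact mul_mem (inv_mem (F.algebraMap_mem _)) (sub_mem (mem_adjoin_simple_self K _)
    (F.algebraMap_mem _))

end Extension

theorem minDegree_le {L : Type*} [Field L] [Algebra ℚ L] {β : L} (hβ : ℚ⟮β⟯ = ⊤) (f : ℚ[X]) :
    minDegree L (aeval β f) ≤ f.natDegree :=
  Nat.sInf_le ⟨β, hβ, f, rfl, rfl⟩

theorem minDegree_eq_two {L : Type*} [Field L] [Algebra ℚ L] {x : L}
    (hx : x ∉ (⊥ : IntermediateField ℚ L)) (hxtop : ℚ⟮x⟯ ≠ ⊤) {β : L} (hβ : ℚ⟮β⟯ = ⊤)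
    {f : ℚ[X]} (hf : f.natDegree = 2) (hfx : aeval β f = x) : minDegree L x = 2 := by
  refine le_antisymm (hfx ▸ hf ▸ minDegree_le hβ f) ?_
  obtain ⟨α, hα, g, hg, hgx⟩ : minDegree L x ∈ {d : ℕ | ∃ α : L, ℚ⟮α⟯ = ⊤ ∧
      ∃ f : ℚ[X], f.natDegree = d ∧ aeval α f = x} :=
    Nat.sInf_mem ⟨2, β, hβ, f, hf, hfx⟩
  by_contra! hlt
  interval_cases h : minDegree L x
  · rw [eq_C_of_natDegree_eq_zero hg, aeval_C] at hgx
    exact hx (hgx ▸ mem_bot.mpr ⟨_, rfl⟩)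
  · refine hxtop (eq_top_iff.mpr (hα ▸ adjoin_simple_le_iff.mpr ?_))
    exact hgx ▸ mem_adjoin_simple_aeval_of_natDegree_eq_one α hg

theorem minDegree_add_mul_eq_two {A B C : ℤ} {L : Type*} [Field L] [Algebra ℚ L] {u v w : L}
    (hL : IsTriquadratic A B C L u v w) {a b : ℚ} (ha : a ≠ 0) (hb : b ≠ 0)
    (hab : a ^ 2 - 1 = ((B : ℚ) - (A : ℚ)) * b ^ 2) :
    minDegree L (u + algebraMap ℚ L a * v) = 2 := by
  have hA := not_isSquare_intCast_of_squarefree hL.sqfA hL.A_ne_one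
  have hB := not_isSquare_intCast_of_squarefree hL.sqfB hL.B_ne_one
  have hAB : ¬IsSquare ((A * B : ℤ) : ℚ) := by
    refine not_isSquare_intCast_of_squarefree (hL.sqfABC.squarefree_of_dvd ⟨C, rfl⟩) fun h ↦ ?_
    rcases Int.mul_eq_one_iff_eq_one_or_neg_one.mp h with ⟨h₁, h₂⟩ | ⟨h₁, h₂⟩
    exacts [hL.A_ne_one h₁, hL.A_ne_B (h₁.trans h₂.symm)]
  have haB : a ^ 2 * B ≠ A := fun h ↦ hAB ⟨a * B, by push_cast; linear_combination -B * h⟩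
  have hAb : (A : ℚ) * b ^ 2 ≠ 1 := fun h ↦ hA ⟨b⁻¹, by field_simp; linear_combination h⟩
  obtain ⟨t, k, hk, γ, hγ, hxγ⟩ := exists_add_mul_sub_eq_mul_sq two_ne_zero hL.hu hL.hv
    (by exact_mod_cast hL.A_ne_zero) (by exact_mod_cast hL.B_ne_zero) hb hAb hab
  set x := u + algebraMap ℚ L a * v
  have hx := adjoin_simple_add_mul_eq_adjoin_pair two_ne_zero hL.hu hL.hv ha haB
  have hxbot : x ∉ (⊥ : IntermediateField ℚ L) := fun h ↦
    notMem_bot_of_sq_eq_algebraMap hL.hv hB <| by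
      rw [← adjoin_simple_eq_bot_iff.mpr h, hx]
      exact subset_adjoin ℚ _ (by simp)
  have hxtop : ℚ⟮x⟯ ≠ ⊤ := fun h ↦ by
    have := finrank_adjoin_pair_le_four hL.hu hL.hv
    rw [← hx, h, finrank_top', hL.deg] at this
    omega
  have hγ₀ : γ ≠ 0 := by
    rintro rfl
    exact hxbot (mem_bot.mpr ⟨t, by linear_combination -hxγ⟩)
  have htop : ℚ⟮x⟯ ⊔ ℚ⟮w⟯ = ⊤ := by
    rw [hx, ← adjoin_union, Set.insert_union, Set.singleton_union, hL.gen]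
  have hC : (C : ℚ) ≠ 0 := by exact_mod_cast hL.C_ne_zero
  refine minDegree_eq_two hxbot hxtop (adjoin_simple_mul_eq_top (hx ▸ hγ) hγ₀ hxγ hL.hw hC htop)
    (natDegree_quadratic (div_ne_zero hk hC) (b := 0) (c := t)) ?_
  rw [eq_add_mul_sq_mul hxγ hL.hw hC]
  simp only [map_add, map_mul, aeval_C, aeval_X, map_pow, map_zero, zero_mul, add_zero]
  ring

theorem injective_sq_add_one_div_sq_sub_one :
    Function.Injective fun k : ℕ ↦ (((k : ℚ) + 2) ^ 2 + 1) / (((k : ℚ) + 2) ^ 2 - 1) := by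
  intro i j h
  have hpos : ∀ k : ℕ, ((k : ℚ) + 2) ^ 2 - 1 ≠ 0 := fun k ↦
    (by nlinarith [k.cast_nonneg (α := ℚ)] : (0 : ℚ) < _).ne'
  rw [div_eq_div_iff (hpos i) (hpos j)] at h
  have hsq : ((i : ℚ) + 2) ^ 2 = ((j : ℚ) + 2) ^ 2 := by linarith
  exact_mod_cast add_right_cancel
    ((pow_left_inj₀ (by positivity) (by positivity) two_ne_zero).mp hsq)

theorem sq_add_sq_div_sq_sub_sq_sq_sub_one {F : Type*} [Field F] {D c m n : F} (hD : D = c ^ 2)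
    (hc : c ≠ 0) (hmn : m ^ 2 - n ^ 2 ≠ 0) :
    ((m ^ 2 + n ^ 2) / (m ^ 2 - n ^ 2)) ^ 2 - 1 = D * (2 * m * n / (c * (m ^ 2 - n ^ 2))) ^ 2 := by
  rw [hD]
  field_simp
  ring

theorem minDegree_add_sq_add_sq_div_sq_sub_sq_mul_eq_two {A B C : ℤ} {L : Type*} [Field L]
    [Algebra ℚ L] {u v w : L} (hL : IsTriquadratic A B C L u v w) {c : ℚ} (hc : c ≠ 0)
    (hBA : (B : ℚ) - A = c ^ 2) {m n : ℚ} (hn : 0 < n) (hnm : n < m) :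
    minDegree L (u + algebraMap ℚ L ((m ^ 2 + n ^ 2) / (m ^ 2 - n ^ 2)) * v) = 2 := by
  have hmn : 0 < m ^ 2 - n ^ 2 := sub_pos.mpr (pow_lt_pow_left₀ hnm hn.le two_ne_zero)
  have hm : 0 < m := hn.trans hnm
  exact minDegree_add_mul_eq_two hL (div_pos (by positivity) hmn).ne'
    (div_ne_zero (by positivity) (mul_ne_zero hc hmn.ne'))
    (sq_add_sq_div_sq_sub_sq_sq_sub_one hBA hc hmn.ne')

/-- If `L = ℚ(√A, √B, √C)` is triquadratic with `B − A = c²` for a nonzero integer `c`,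
then the set of rationals `a` with `min deg_L(√A + a√B) = 2` is infinite; indeed for all
integers `m > n > 0`, the pair `a = (m² + n²)/(m² − n²)`, `b = 2mn/(c(m² − n²))`
satisfies `a² − 1 = (B − A)b²`, and each such `a` works. -/
theorem stmt_15 (A B C : ℤ) (L : Type*) [Field L] [Algebra ℚ L] (u v w : L)
    (hL : IsTriquadratic A B C L u v w) (c : ℤ) (hc : c ≠ 0) (hBA : B - A = c ^ 2) :
    {a : ℚ | minDegree L (u + algebraMap ℚ L a * v) = 2}.Infinite ∧
    ∀ m n : ℤ, 0 < n → n < m →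
      (((m : ℚ) ^ 2 + (n : ℚ) ^ 2) / ((m : ℚ) ^ 2 - (n : ℚ) ^ 2)) ^ 2 - 1 =
          ((B : ℚ) - (A : ℚ)) *
            (2 * (m : ℚ) * (n : ℚ) / ((c : ℚ) * ((m : ℚ) ^ 2 - (n : ℚ) ^ 2))) ^ 2 ∧
      minDegree L (u + algebraMap ℚ L
          (((m : ℚ) ^ 2 + (n : ℚ) ^ 2) / ((m : ℚ) ^ 2 - (n : ℚ) ^ 2)) * v) = 2 := by
  have hBA' : (B : ℚ) - A = (c : ℚ) ^ 2 := by exact_mod_cast hBA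
  have hc' : (c : ℚ) ≠ 0 := by exact_mod_cast hc
  refine ⟨Set.infinite_of_injective_forall_mem injective_sq_add_one_div_sq_sub_one fun k ↦ ?_,
    fun m n hn hnm ↦ ⟨sq_add_sq_div_sq_sub_sq_sq_sub_one hBA' hc' ?_,
      minDegree_add_sq_add_sq_div_sq_sub_sq_mul_eq_two hL hc' hBA' (by exact_mod_cast hn)
        (by exact_mod_cast hnm)⟩⟩
  · simpa only [Set.mem_ofPred_eq, one_pow] using
      minDegree_add_sq_add_sq_div_sq_sub_sq_mul_eq_two hL hc' hBA' one_pos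
        (m := (k : ℚ) + 2) (by linarith [k.cast_nonneg (α := ℚ)])
  · have hnm : (n : ℚ) ^ 2 < (m : ℚ) ^ 2 :=
      pow_lt_pow_left₀ (by exact_mod_cast hnm) (by positivity) two_ne_zero
    exact (sub_pos.mpr hnm).ne'
end
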